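/- There exists a universal constant C > 0 (one may take C = 32√2) such that for any holomorphic map φ : 𝔻 → 𝔻 with φ(0) = 0, any r ∈ (0,1), and any ζ₀ ∈ 𝔻 \ {0}, the inequality |φ(ζ) − ζ| ≤ C · |φ(ζ₀) − ζ₀| / (|ζ₀|·(1 − |ζ₀|²)·(1 − r²)) holds for all ζ with |ζ| ≤ r. -/

import Mathlib

open Complex Set Metric ComplexConjugate

/-!
Write `φ ζ = ζ ψ ζ` with `ψ = dslope φ 0`; by Schwarz's lemma `‖ψ‖ ≤ 1`, so by the maximum
modulus principle either `ψ` is a unimodular constant or `g = 1 - ψ` maps the disk into the right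
half-plane. In the second case Schwarz's lemma for the Cayley-type transform
`(g - g 0) / (g + conj (g 0))` of `g` gives the Harnack inequalities
`‖g z‖ (1 - ‖z‖) ≤ ‖g 0‖ (1 + ‖z‖)` and `‖g 0‖ (1 - ‖z‖) ≤ ‖g z‖ (1 + ‖z‖)`. Chaining them through
`g 0` bounds `‖g ζ‖ (1 - ‖ζ‖²)(1 - ‖ζ₀‖²)` by `16 ‖g ζ₀‖`, which gives the estimate with `C = 16`.
-/

namespace Complex

theorem norm_sub_lt_norm_add_conj {u a : ℂ} (hu : 0 < u.re) (ha : 0 < a.re) :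
    ‖u - a‖ < ‖u + conj a‖ := by
  rw [← sq_lt_sq₀ (norm_nonneg _) (norm_nonneg _), ← normSq_eq_norm_sq, ← normSq_eq_norm_sq]
  simp only [normSq_apply, sub_re, sub_im, add_re, add_im, conj_re, conj_im]
  nlinarith [mul_pos hu ha]

variable {g : ℂ → ℂ} {z w : ℂ}

theorem norm_sub_apply_zero_le_mul_of_re_pos (hg : DifferentiableOn ℂ g (ball 0 1))
    (hre : ∀ z ∈ ball (0 : ℂ) 1, 0 < (g z).re) (hz : z ∈ ball (0 : ℂ) 1) :
    ‖g z - g 0‖ ≤ ‖z‖ * ‖g z + conj (g 0)‖ := by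
  have h0 : (0 : ℂ) ∈ ball (0 : ℂ) 1 := mem_ball_self one_pos
  have hden : ∀ z ∈ ball (0 : ℂ) 1, 0 < ‖g z + conj (g 0)‖ := fun z hz =>
    (norm_nonneg _).trans_lt (norm_sub_lt_norm_add_conj (hre z hz) (hre 0 h0))
  set F : ℂ → ℂ := fun z => (g z - g 0) / (g z + conj (g 0))
  have hFd : DifferentiableOn ℂ F (ball 0 1) :=
    (hg.sub_const _).div (hg.add_const _) fun z hz => norm_pos_iff.mp (hden z hz)
  have hFmaps : MapsTo F (ball 0 1) (closedBall 0 1) := fun z hz => by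
    rw [mem_closedBall_zero_iff, norm_div, div_le_one (hden z hz)]
    exact (norm_sub_lt_norm_add_conj (hre z hz) (hre 0 h0)).le
  have hF := norm_le_norm_of_mapsTo_ball hFd hFmaps (by simp [F]) (mem_ball_zero_iff.mp hz)
  rwa [norm_div, div_le_iff₀ (hden z hz)] at hF

theorem norm_mul_one_sub_le_of_re_pos (hg : DifferentiableOn ℂ g (ball 0 1))
    (hre : ∀ z ∈ ball (0 : ℂ) 1, 0 < (g z).re) (hz : z ∈ ball (0 : ℂ) 1) :
    ‖g z‖ * (1 - ‖z‖) ≤ ‖g 0‖ * (1 + ‖z‖) := by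
  have h := norm_sub_apply_zero_le_mul_of_re_pos hg hre hz
  have h₁ := norm_sub_norm_le (g z) (g 0)
  have h₂ := mul_le_mul_of_nonneg_left ((norm_add_le _ _).trans_eq
    (by rw [norm_conj] : ‖g z‖ + ‖conj (g 0)‖ = ‖g z‖ + ‖g 0‖)) (norm_nonneg z)
  nlinarith

theorem norm_apply_zero_mul_one_sub_le_of_re_pos (hg : DifferentiableOn ℂ g (ball 0 1))
    (hre : ∀ z ∈ ball (0 : ℂ) 1, 0 < (g z).re) (hz : z ∈ ball (0 : ℂ) 1) :
    ‖g 0‖ * (1 - ‖z‖) ≤ ‖g z‖ * (1 + ‖z‖) := by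
  have h := norm_sub_apply_zero_le_mul_of_re_pos hg hre hz
  have h₁ := norm_sub_norm_le (g 0) (g z)
  rw [norm_sub_rev] at h₁
  have h₂ := mul_le_mul_of_nonneg_left ((norm_add_le _ _).trans_eq
    (by rw [norm_conj] : ‖g z‖ + ‖conj (g 0)‖ = ‖g z‖ + ‖g 0‖)) (norm_nonneg z)
  nlinarith

theorem norm_mul_one_sub_sq_mul_one_sub_sq_le_of_re_pos (hg : DifferentiableOn ℂ g (ball 0 1))
    (hre : ∀ z ∈ ball (0 : ℂ) 1, 0 < (g z).re) (hz : z ∈ ball (0 : ℂ) 1)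
    (hw : w ∈ ball (0 : ℂ) 1) :
    ‖g z‖ * ((1 - ‖z‖ ^ 2) * (1 - ‖w‖ ^ 2)) ≤ 16 * ‖g w‖ := by
  rw [mem_ball_zero_iff] at hz hw
  have hz₀ := norm_nonneg z
  have hw₀ := norm_nonneg w
  have hupper : ‖g z‖ * (1 - ‖z‖) * (1 - ‖w‖) ≤ ‖g 0‖ * (1 + ‖z‖) * (1 - ‖w‖) :=
    mul_le_mul_of_nonneg_right (norm_mul_one_sub_le_of_re_pos hg hre (mem_ball_zero_iff.mpr hz))
      (by linarith)
  have hlower : ‖g 0‖ * (1 - ‖w‖) * (1 + ‖z‖) ≤ ‖g w‖ * (1 + ‖w‖) * (1 + ‖z‖) :=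
    mul_le_mul_of_nonneg_right
      (norm_apply_zero_mul_one_sub_le_of_re_pos hg hre (mem_ball_zero_iff.mpr hw)) (by linarith)
  have hfour : (1 + ‖z‖) * (1 + ‖w‖) ≤ 4 := by nlinarith
  calc ‖g z‖ * ((1 - ‖z‖ ^ 2) * (1 - ‖w‖ ^ 2))
      = ‖g z‖ * (1 - ‖z‖) * (1 - ‖w‖) * ((1 + ‖z‖) * (1 + ‖w‖)) := by ring
    _ ≤ ‖g w‖ * ((1 + ‖z‖) * (1 + ‖w‖)) * ((1 + ‖z‖) * (1 + ‖w‖)) := by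
        gcongr ?_ * _; linarith
    _ ≤ ‖g w‖ * 4 * 4 := by gcongr
    _ = 16 * ‖g w‖ := by ring

theorem norm_sub_one_mul_one_sub_sq_mul_one_sub_sq_le {ψ : ℂ → ℂ}
    (hψ : DifferentiableOn ℂ ψ (ball 0 1)) (hmaps : MapsTo ψ (ball 0 1) (closedBall 0 1))
    (hz : z ∈ ball (0 : ℂ) 1) (hw : w ∈ ball (0 : ℂ) 1) :
    ‖ψ z - 1‖ * ((1 - ‖z‖ ^ 2) * (1 - ‖w‖ ^ 2)) ≤ 16 * ‖ψ w - 1‖ := by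
  by_cases hlt : ∀ z ∈ ball (0 : ℂ) 1, ‖ψ z‖ < 1
  · have hre : ∀ z ∈ ball (0 : ℂ) 1, 0 < (1 - ψ z).re := fun z hz => by
      simpa using (re_le_norm (ψ z)).trans_lt (hlt z hz)
    simpa only [norm_sub_rev (1 : ℂ)] using norm_mul_one_sub_sq_mul_one_sub_sq_le_of_re_pos
      (g := fun z => 1 - ψ z) ((differentiableOn_const 1).sub hψ) hre hz hw
  · push Not at hlt
    obtain ⟨z₁, hz₁, hψz₁⟩ := hlt
    have hmax : IsMaxOn (norm ∘ ψ) (ball 0 1) z₁ := fun z hz =>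
      (mem_closedBall_zero_iff.mp (hmaps hz)).trans hψz₁
    have hconst := eqOn_of_isPreconnected_of_isMaxOn_norm (convex_ball (0 : ℂ) 1).isPreconnected
      isOpen_ball hψ hz₁ hmax
    rw [(hconst hz).trans (hconst hw).symm]
    rw [mem_ball_zero_iff] at hz hw
    have hprod : (1 - ‖z‖ ^ 2) * (1 - ‖w‖ ^ 2) ≤ 1 :=
      mul_le_one₀ (by nlinarith) (by nlinarith [norm_nonneg w]) (by nlinarith)
    nlinarith [norm_nonneg (ψ w - 1)]

theorem mapsTo_dslope_zero_closedBall {φ : ℂ → ℂ} (hd : DifferentiableOn ℂ φ (ball 0 1))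
    (hmaps : MapsTo φ (ball 0 1) (ball 0 1)) (h0 : φ 0 = 0) :
    MapsTo (dslope φ 0) (ball 0 1) (closedBall 0 1) := fun z hz => by
  have hmaps' : MapsTo φ (ball 0 1) (closedBall (φ 0) 1) := by
    rw [h0]; exact hmaps.mono_right ball_subset_closedBall
  simpa using norm_dslope_le_div_of_mapsTo_ball hd hmaps' hz

theorem sub_self_eq_mul_dslope_zero_sub_one {φ : ℂ → ℂ} (h0 : φ 0 = 0) (z : ℂ) :
    φ z - z = z * (dslope φ 0 z - 1) := by
  have h := sub_smul_dslope φ 0 z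
  rw [sub_zero, h0, sub_zero, smul_eq_mul] at h
  rw [← h]
  ring

end Complex

theorem universal_schwarz_type_estimate :
    ∃ C : ℝ, 0 < C ∧
      ∀ φ : ℂ → ℂ, DifferentiableOn ℂ φ (ball (0:ℂ) 1) →
        MapsTo φ (ball (0:ℂ) 1) (ball (0:ℂ) 1) → φ 0 = 0 →
        ∀ r : ℝ, r ∈ Ioo (0:ℝ) 1 →
        ∀ ζ₀ : ℂ, ζ₀ ∈ ball (0:ℂ) 1 \ {0} →
        ∀ ζ : ℂ, ‖ζ‖ ≤ r →
          ‖φ ζ - ζ‖ ≤ C / (‖ζ₀‖ * (1 - ‖ζ₀‖ ^ 2) * (1 - r ^ 2)) * ‖φ ζ₀ - ζ₀‖ := by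
  refine ⟨16, by norm_num, fun φ hd hmaps h0 r ⟨hr0, hr1⟩ ζ₀ ⟨hζ₀, hζ₀0⟩ ζ hζ => ?_⟩
  set ψ := dslope φ 0
  have hψ : DifferentiableOn ℂ ψ (ball 0 1) :=
    (differentiableOn_dslope (ball_mem_nhds _ one_pos)).mpr hd
  have hζ1 : ζ ∈ ball (0 : ℂ) 1 := mem_ball_zero_iff.mpr (hζ.trans_lt hr1)
  have hkey := norm_sub_one_mul_one_sub_sq_mul_one_sub_sq_le hψ
    (mapsTo_dslope_zero_closedBall hd hmaps h0) hζ1 hζ₀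
  have hs0 : 0 < ‖ζ₀‖ := norm_pos_iff.mpr hζ₀0
  have hs1 : ‖ζ₀‖ < 1 := mem_ball_zero_iff.mp hζ₀
  have h1s : 0 < 1 - ‖ζ₀‖ ^ 2 := by nlinarith
  have h1r : 0 < 1 - r ^ 2 := by nlinarith
  rw [sub_self_eq_mul_dslope_zero_sub_one h0, sub_self_eq_mul_dslope_zero_sub_one h0,
    norm_mul, norm_mul,
    show 16 / (‖ζ₀‖ * (1 - ‖ζ₀‖ ^ 2) * (1 - r ^ 2)) * (‖ζ₀‖ * ‖ψ ζ₀ - 1‖)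
      = 16 * ‖ψ ζ₀ - 1‖ / ((1 - ‖ζ₀‖ ^ 2) * (1 - r ^ 2)) by field_simp,
    le_div_iff₀ (by positivity)]
  calc ‖ζ‖ * ‖ψ ζ - 1‖ * ((1 - ‖ζ₀‖ ^ 2) * (1 - r ^ 2))
      ≤ 1 * ‖ψ ζ - 1‖ * ((1 - ‖ζ₀‖ ^ 2) * (1 - ‖ζ‖ ^ 2)) := by
        gcongr
        exact hζ.trans hr1.le
    _ = ‖ψ ζ - 1‖ * ((1 - ‖ζ‖ ^ 2) * (1 - ‖ζ₀‖ ^ 2)) := by ring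
    _ ≤ 16 * ‖ψ ζ₀ - 1‖ := hkey
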